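/- Let A, B₁, B₂, U₁, U₂ > 0, let φ₀ < φ₁ < φ₂ be real numbers, and suppose that for every τ ≥ τ₀ > 0, A ≤ B₁ e^{τ(φ₁ - φ₀)} U₁ + B₂ e^{τ(φ₁ - φ₂)} U₂. Define k₀ = (φ₂ - φ₁)/(φ₂ - φ₀) ∈ (0,1) and τ₁ = (k₀/(φ₂ - φ₁)) log(B₂U₂/(B₁U₁)). Then either τ₁ ≥ τ₀ and A ≤ 2 (B₁U₁)^{k₀} (B₂U₂)^{1-k₀}, or τ₁ < τ₀ and B₂U₂ < B₁U₁ e^{τ₀(φ₂ - φ₀)}. -/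

import Mathlib

/-- abstract optimization-in-τ step producing a three-ball inequality.
With `k₀ = (φ₂-φ₁)/(φ₂-φ₀) ∈ (0,1)` and
`τ₁ = (k₀/(φ₂-φ₁)) log(B₂U₂/(B₁U₁))`, either `τ₁ ≥ τ₀` and
`A ≤ 2 (B₁U₁)^{k₀} (B₂U₂)^{1-k₀}`, or `τ₁ < τ₀` and `B₂U₂ < B₁U₁ e^{τ₀(φ₂-φ₀)}`. -/
theorem stmt_19 (A B₁ B₂ U₁ U₂ τ₀ φ₀ φ₁ φ₂ : ℝ)
    (hA : 0 < A) (hB₁ : 0 < B₁) (hB₂ : 0 < B₂) (hU₁ : 0 < U₁) (hU₂ : 0 < U₂)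
    (hτ₀ : 0 < τ₀) (h01 : φ₀ < φ₁) (h12 : φ₁ < φ₂)
    (h : ∀ τ : ℝ, τ₀ ≤ τ →
      A ≤ B₁ * Real.exp (τ * (φ₁ - φ₀)) * U₁ + B₂ * Real.exp (τ * (φ₁ - φ₂)) * U₂) :
    (φ₂ - φ₁) / (φ₂ - φ₀) ∈ Set.Ioo (0 : ℝ) 1 ∧
    ((τ₀ ≤ ((φ₂ - φ₁) / (φ₂ - φ₀)) / (φ₂ - φ₁) * Real.log (B₂ * U₂ / (B₁ * U₁)) ∧
        A ≤ 2 * (B₁ * U₁) ^ ((φ₂ - φ₁) / (φ₂ - φ₀))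
          * (B₂ * U₂) ^ (1 - (φ₂ - φ₁) / (φ₂ - φ₀))) ∨
      (((φ₂ - φ₁) / (φ₂ - φ₀)) / (φ₂ - φ₁) * Real.log (B₂ * U₂ / (B₁ * U₁)) < τ₀ ∧
        B₂ * U₂ < B₁ * U₁ * Real.exp (τ₀ * (φ₂ - φ₀)))) := by
  have h20 : (0:ℝ) < φ₂ - φ₀ := by linarith
  have h21 : (0:ℝ) < φ₂ - φ₁ := by linarith
  have h10 : (0:ℝ) < φ₁ - φ₀ := by linarith
  set k : ℝ := (φ₂ - φ₁) / (φ₂ - φ₀) with hk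
  set M₁ : ℝ := B₁ * U₁ with hM₁def
  set M₂ : ℝ := B₂ * U₂ with hM₂def
  have hM₁ : 0 < M₁ := mul_pos hB₁ hU₁
  have hM₂ : 0 < M₂ := mul_pos hB₂ hU₂
  set τ₁ : ℝ := k / (φ₂ - φ₁) * Real.log (M₂ / M₁) with hτ₁def
  have hkIoo : k ∈ Set.Ioo (0:ℝ) 1 := by
    constructor
    · exact div_pos h21 h20
    · rw [div_lt_one h20]; linarith
  refine ⟨hkIoo, ?_⟩
  have hLdiv : Real.log (M₂ / M₁) = Real.log M₂ - Real.log M₁ :=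
    Real.log_div (ne_of_gt hM₂) (ne_of_gt hM₁)
  rcases le_or_gt τ₀ τ₁ with hc | hc
  · left
    refine ⟨hc, ?_⟩
    have key := h τ₁ hc
    have e1 : B₁ * Real.exp (τ₁ * (φ₁ - φ₀)) * U₁
        = Real.exp (k * Real.log M₁ + (1 - k) * Real.log M₂) := by
      have : B₁ * Real.exp (τ₁ * (φ₁ - φ₀)) * U₁
          = Real.exp (Real.log M₁) * Real.exp (τ₁ * (φ₁ - φ₀)) := by
        rw [Real.exp_log hM₁]; ring
      rw [this, ← Real.exp_add]
      congr 1
      rw [hτ₁def, hLdiv, hk]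
      field_simp
      ring
    have e2 : B₂ * Real.exp (τ₁ * (φ₁ - φ₂)) * U₂
        = Real.exp (k * Real.log M₁ + (1 - k) * Real.log M₂) := by
      have : B₂ * Real.exp (τ₁ * (φ₁ - φ₂)) * U₂
          = Real.exp (Real.log M₂) * Real.exp (τ₁ * (φ₁ - φ₂)) := by
        rw [Real.exp_log hM₂]; ring
      rw [this, ← Real.exp_add]
      congr 1
      rw [hτ₁def, hLdiv, hk]
      field_simp
      ring
    have e3 : M₁ ^ k * M₂ ^ (1 - k)
        = Real.exp (k * Real.log M₁ + (1 - k) * Real.log M₂) := by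
      rw [Real.rpow_def_of_pos hM₁, Real.rpow_def_of_pos hM₂, ← Real.exp_add]
      ring_nf
    calc A ≤ B₁ * Real.exp (τ₁ * (φ₁ - φ₀)) * U₁ + B₂ * Real.exp (τ₁ * (φ₁ - φ₂)) * U₂ := key
    _ = 2 * (M₁ ^ k * M₂ ^ (1 - k)) := by rw [e1, e2, e3]; ring
    _ = 2 * M₁ ^ k * M₂ ^ (1 - k) := by ring
  · right
    refine ⟨hc, ?_⟩
    have hkeq : k / (φ₂ - φ₁) = 1 / (φ₂ - φ₀) := by
      rw [hk]; field_simp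
    have hlt : Real.log (M₂ / M₁) < τ₀ * (φ₂ - φ₀) := by
      have : (1 / (φ₂ - φ₀)) * Real.log (M₂ / M₁) < τ₀ := by
        rw [← hkeq]; exact hc
      calc Real.log (M₂ / M₁) = ((1 / (φ₂ - φ₀)) * Real.log (M₂ / M₁)) * (φ₂ - φ₀) := by
            field_simp
      _ < τ₀ * (φ₂ - φ₀) := by exact mul_lt_mul_of_pos_right this h20
    have := Real.exp_lt_exp.mpr hlt
    rw [Real.exp_log (div_pos hM₂ hM₁)] at this
    rw [div_lt_iff₀ hM₁] at this
    linarith [this]
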